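/- (Average minimum rank distance of random codes) Let q be a prime power and 0 < α < 1 a fixed real. For each n ≥ 2, let m(n) ≥ n be an integer and N(n) ≥ 2 an integer with 3·log_q(n)·q^{m(n)+n} ≤ N(n) ≤ q^{α·m(n)·n}. Define p_i^{(n)} = (1 − B_{i−1}/q^{m(n)n})^{N(n)} − (1 − B_i/q^{m(n)n})^{N(n)} for 1 ≤ i ≤ n, E_n = Σ_{i=1}^n i·p_i^{(n)}, and 𝓜_n = (m(n)+n)/2 − √((m(n)−n)²/4 + log_q N(n)). Then there exist a constant C > 0 and an integer n₀ such that |E_n − 𝓜_n| ≤ C for all n ≥ n₀. -/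

import Mathlib

open scoped BigOperators

/-- Number of `m × n` matrices over `F` of rank at most `t`. -/
noncomputable def ballCount (F : Type*) [Field F] [Fintype F] (m n t : ℕ) : ℕ :=
  Nat.card {A : Matrix (Fin m) (Fin n) F // A.rank ≤ t}

/-!
With `Q = q^(mn)`, `L = log_q N` and `f j = (1 - B_j / Q)^N`, summation by parts gives
`E_n = ∑_{j<n} f j`, since `B_n = Q`. Counting rank factorisations shows that `B_j` is
`q^(j(m+n-j))` up to a factor `4`, so `N B_j / Q` is `q^((j-𝓜)(m+n-𝓜-j))` up to a factor `4`:
the exponent vanishes at `j = 𝓜`, the smaller root of `(m-x)(n-x) = L`, and its second factor is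
at least `√L`. Hence `f j ≥ 1 - 4 q^(-√L)` for `j ≤ 𝓜 - 1` and `f j ≤ exp(-q^√L / 4)` for
`j ≥ 𝓜 + 1`, and as `q^√L ≥ L/8 ≥ n/4`, the `n` error terms add up to a bounded amount.
-/

open Matrix Module

theorem Submodule.exists_le_finrank_eq {K V : Type*} [Field K] [AddCommGroup V] [Module K V]
    [FiniteDimensional K V] (p : Submodule K V) {j : ℕ} (hp : finrank K p ≤ j)
    (hj : j ≤ finrank K V) : ∃ W : Submodule K V, p ≤ W ∧ finrank K W = j := by
  induction j with
  | zero => exact ⟨p, le_rfl, by omega⟩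
  | succ j ih =>
    rcases hp.eq_or_lt with hp | hp
    · exact ⟨p, le_rfl, hp⟩
    obtain ⟨W, hpW, hW⟩ := ih (by omega) (by omega)
    have hW_lt : W < ⊤ := lt_top_iff_ne_top.mpr fun h => by
      rw [h, finrank_top] at hW; omega
    obtain ⟨v, -, hv⟩ := SetLike.exists_of_lt hW_lt
    exact ⟨W ⊔ Submodule.span K {v}, hpW.trans le_sup_left,
      by rw [Submodule.finrank_sup_span_singleton hv, hW]⟩

namespace Matrix

variable {K : Type*} [Field K]

theorem mul_left_injective_of_linearIndependent_row {l m n : Type*} [Fintype m]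
    {R : Matrix m n K} (hR : LinearIndependent K R.row) :
    Function.Injective fun X : Matrix l m K => X * R := fun _ _ h =>
  ext_row fun i => vecMul_injective_iff.mpr hR congr(($h).row i)

theorem mul_right_injective_of_linearIndependent_col {l m n : Type*} [Fintype m]
    {C : Matrix l m K} (hC : LinearIndependent K C.col) :
    Function.Injective fun X : Matrix m n K => C * X := fun _ _ h =>
  ext_col fun j => mulVec_injective_iff.mpr hC congr(($h).col j)

theorem exists_eq_mul_of_rank_le {m n : Type*} [Fintype m] [Fintype n] {j : ℕ}
    (A : Matrix m n K) (hA : A.rank ≤ j) (hj : j ≤ Fintype.card n) :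
    ∃ (C : Matrix m (Fin j) K) (R : Matrix (Fin j) n K),
      LinearIndependent K R.row ∧ A = C * R := by
  obtain ⟨W, hAW, hW⟩ := Submodule.exists_le_finrank_eq (j := j)
    (Submodule.span K (Set.range A.row)) (by rwa [← rank_eq_finrank_span_row])
    (by rwa [finrank_fintype_fun_eq_card])
  let b := finBasisOfFinrankEq K W hW
  have hrow : ∀ a, A a ∈ W := fun a => hAW (Submodule.subset_span ⟨a, rfl⟩)
  refine ⟨of fun a i => b.repr ⟨A a, hrow a⟩ i, of fun i => (b i : n → K),
    b.linearIndependent.map' W.subtype W.ker_subtype, ext_row fun a => ?_⟩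
  have := congrArg W.subtype (b.sum_repr ⟨A a, hrow a⟩)
  simp only [map_sum, map_smul, Submodule.subtype_apply] at this
  exact this.symm.trans (vecMul_eq_sum _ _).symm

theorem natCard_fin {α : Type*} [Fintype α] (a b : ℕ) :
    Nat.card (Matrix (Fin a) (Fin b) α) = Fintype.card α ^ (a * b) := by
  simp [Nat.card_eq_fintype_card, Matrix, ← pow_mul, mul_comm]

end Matrix

section Counting

variable {F : Type*} [Field F] [Fintype F]

theorem ballCount_le (m n t : ℕ) : ballCount F m n t ≤ Fintype.card F ^ (m * n) :=
  (Finite.card_subtype_le _).trans_eq (natCard_fin m n)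

theorem ballCount_of_le {m n t : ℕ} (h : n ≤ t) : ballCount F m n t = Fintype.card F ^ (m * n) :=
  (Nat.card_congr (Equiv.subtypeUnivEquiv fun A => (rank_le_width A).trans h)).trans
    (natCard_fin m n)

/-- The matrices `C [1 | S]` with `C` of full column rank `j` are pairwise distinct. -/
theorem card_linearIndependent_mul_le_ballCount {m j k : ℕ} (hjm : j ≤ m) :
    (∏ i : Fin j, (Fintype.card F ^ m - Fintype.card F ^ (i : ℕ))) *
      Fintype.card F ^ (j * k) ≤ ballCount F m (j + k) j := by
  let e : Fin j ⊕ Fin k ≃ Fin (j + k) := finSumFinEquiv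
  let Φ : {s : Fin j → Fin m → F // LinearIndependent F s} × Matrix (Fin j) (Fin k) F →
      {A : Matrix (Fin m) (Fin (j + k)) F // A.rank ≤ j} := fun p =>
    ⟨(of p.1.1)ᵀ * (fromCols 1 p.2).submatrix id e.symm,
      (rank_mul_le_left _ _).trans (rank_le_width _)⟩
  have hΦ : Function.Injective Φ := by
    rintro ⟨s, S⟩ ⟨s', S'⟩ h
    have h' := congr((($h).1).submatrix id e)
    simp only [Φ, submatrix_mul _ _ id id e Function.bijective_id, submatrix_submatrix,
      Function.comp_id, Equiv.symm_comp_self, submatrix_id_id, mul_fromCols, Matrix.mul_one,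
      fromCols_inj.eq_iff] at h'
    obtain ⟨hs, hS⟩ := h'
    have hss' : s = s' := Subtype.ext (transpose_injective hs)
    subst hss'
    exact Prod.ext rfl (mul_right_injective_of_linearIndependent_col s.2 hS)
  calc _ = Nat.card ({s : Fin j → Fin m → F // LinearIndependent F s} ×
        Matrix (Fin j) (Fin k) F) := by
        rw [Nat.card_prod, card_linearIndependent (by simpa using hjm), natCard_fin]
        simp
    _ ≤ ballCount F m (j + k) j := Nat.card_le_card_of_injective Φ hΦ

/-- Choosing a factorisation `A = C R` with `R` of full row rank for every `A`,
the map `(A, g) ↦ (C g, g⁻¹ R)` is injective. -/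
theorem ballCount_mul_card_GL_le {m n j : ℕ} (hjn : j ≤ n) :
    ballCount F m n j * ∏ i : Fin j, (Fintype.card F ^ j - Fintype.card F ^ (i : ℕ)) ≤
      Fintype.card F ^ (m * j) * ∏ i : Fin j, (Fintype.card F ^ n - Fintype.card F ^ (i : ℕ)) := by
  choose C R hR hCR using fun A : {A : Matrix (Fin m) (Fin n) F // A.rank ≤ j} =>
    exists_eq_mul_of_rank_le A.1 A.2 (by simpa using hjn)
  let Ψ : {A : Matrix (Fin m) (Fin n) F // A.rank ≤ j} × GL (Fin j) F →
      Matrix (Fin m) (Fin j) F × {s : Fin j → Fin n → F // LinearIndependent F s} := fun p =>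
    (C p.1 * p.2.val, ⟨(p.2⁻¹.val * R p.1).row, vecMul_injective_iff.mp <| by
      simp only [← vecMul_vecMul]
      exact (vecMul_injective_iff.mpr (hR p.1)).comp
        (vecMul_injective_of_isUnit p.2⁻¹.isUnit)⟩)
  have hΨ : Function.Injective Ψ := by
    rintro ⟨A, g⟩ ⟨A', g'⟩ h
    obtain ⟨hC, hR'⟩ := Prod.ext_iff.mp h
    replace hC : C A * g.val = C A' * g'.val := hC
    replace hR' : g⁻¹.val * R A = g'⁻¹.val * R A' := congrArg Subtype.val hR'
    have hAA' : A = A' := Subtype.ext <| by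
      calc A.1 = C A * g.val * (g⁻¹.val * R A) := by simp [Matrix.mul_assoc, hCR A]
        _ = C A' * g'.val * (g'⁻¹.val * R A') := by rw [hC, hR']
        _ = A' := by simp [Matrix.mul_assoc, hCR A']
    subst hAA'
    rw [inv_injective (Units.ext (mul_left_injective_of_linearIndependent_row (hR A) hR'))]
  calc _ = Nat.card ({A : Matrix (Fin m) (Fin n) F // A.rank ≤ j} × GL (Fin j) F) := by
        rw [Nat.card_prod, card_GL_field]; rfl
    _ ≤ _ := Nat.card_le_card_of_injective Ψ hΨ
    _ = _ := by
        rw [Nat.card_prod, card_linearIndependent (by simpa using hjn), natCard_fin]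
        simp

end Counting

open Finset

/-- The induction hypothesis behind `quarter_le_prod_one_sub_pow`. -/
theorem half_add_le_prod_one_sub_pow {r : ℝ} (h0 : 0 ≤ r) (h : r ≤ 1 / 2) (j : ℕ) :
    1 / 2 + 2 * r ^ (j + 2) ≤ ∏ t ∈ range j, (1 - r ^ (t + 2)) := by
  induction j with
  | zero => rw [prod_range_zero]; nlinarith
  | succ j ih =>
    rw [prod_range_succ]
    have hr : r ^ (j + 3) = r * r ^ (j + 2) := by ring
    have hr2 : r ^ (j + 2) ≤ 1 / 4 :=
      (pow_le_pow_of_le_one h0 (by linarith) (by omega : 2 ≤ j + 2)).trans (by nlinarith)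
    nlinarith [pow_nonneg h0 (j + 2), mul_nonneg h0 (pow_nonneg h0 (j + 2))]

theorem quarter_le_prod_one_sub_pow {r : ℝ} (h0 : 0 ≤ r) (h : r ≤ 1 / 2) (j : ℕ) :
    1 / 4 ≤ ∏ t ∈ range j, (1 - r ^ (t + 1)) := by
  cases j with
  | zero => norm_num
  | succ j =>
    rw [prod_range_succ']
    nlinarith [half_add_le_prod_one_sub_pow h0 h j, pow_nonneg h0 (j + 2)]

theorem pow_mul_div_four_le_prod_pow_sub_pow {q : ℝ} (hq : 2 ≤ q) {j k : ℕ} (hjk : j ≤ k) :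
    q ^ (k * j) / 4 ≤ ∏ i ∈ range j, (q ^ k - q ^ i) := by
  have hq0 : 0 < q := by linarith
  have hfactor : ∀ i ∈ range j, q ^ k * (1 - q⁻¹ ^ (j - i)) ≤ q ^ k - q ^ i := by
    intro i hi
    have hij : i + (j - i) ≤ k := by have := mem_range.mp hi; omega
    have : q ^ i * q ^ (j - i) ≤ q ^ k := by
      rw [← pow_add]; exact pow_le_pow_right₀ (by linarith) hij
    rw [inv_pow, mul_sub, mul_one, sub_le_sub_iff_left, ← div_eq_mul_inv,
      le_div_iff₀ (by positivity)]
    exact this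
  calc q ^ (k * j) / 4 ≤ q ^ (k * j) * ∏ t ∈ range j, (1 - q⁻¹ ^ (t + 1)) := by
        have := quarter_le_prod_one_sub_pow (r := q⁻¹) (by positivity)
          (by rw [one_div]; exact inv_anti₀ (by norm_num) hq) j
        nlinarith [pow_pos hq0 (k * j)]
    _ = ∏ i ∈ range j, q ^ k * (1 - q⁻¹ ^ (j - i)) := by
        rw [prod_mul_distrib, prod_const, card_range, pow_mul,
          ← prod_range_reflect (fun t => 1 - q⁻¹ ^ (t + 1))]
        congr 1
        refine prod_congr rfl fun i hi => ?_
        simp only [mem_range] at hi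
        congr 2
        omega
    _ ≤ ∏ i ∈ range j, (q ^ k - q ^ i) :=
        prod_le_prod (fun i hi => mul_nonneg (by positivity) (sub_nonneg.mpr
          (pow_le_one₀ (by positivity) (inv_le_one_of_one_le₀ (by linarith))))) hfactor

theorem pow_mul_div_four_le_prod_fin_pow_sub_pow {q : ℕ} (hq : 2 ≤ q) {j k : ℕ} (hjk : j ≤ k) :
    (q : ℝ) ^ (k * j) / 4 ≤ ((∏ i : Fin j, (q ^ k - q ^ (i : ℕ)) : ℕ) : ℝ) := by
  rw [Fin.prod_univ_eq_prod_range (fun i => q ^ k - q ^ i), Nat.cast_prod]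
  refine (pow_mul_div_four_le_prod_pow_sub_pow (by exact_mod_cast hq) hjk).trans_eq
    (prod_congr rfl fun i hi => ?_)
  rw [Nat.cast_sub (Nat.pow_le_pow_right (by omega) (by have := mem_range.mp hi; omega))]
  push_cast; rfl

section BallCountBounds

variable {F : Type*} [Field F] [Fintype F]

theorem rpow_div_four_le_ballCount {m n j : ℕ} (hjm : j ≤ m) (hjn : j ≤ n) :
    (Fintype.card F : ℝ) ^ ((j : ℝ) * (m + n - j)) / 4 ≤ ballCount F m n j := by
  obtain ⟨k, rfl⟩ := Nat.exists_eq_add_of_le hjn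
  have hq : 2 ≤ Fintype.card F := Fintype.one_lt_card
  have hcount := card_linearIndependent_mul_le_ballCount (F := F) (k := k) hjm
  calc (Fintype.card F : ℝ) ^ ((j : ℝ) * (m + (j + k : ℕ) - j)) / 4
      = (Fintype.card F : ℝ) ^ (m * j) / 4 * (Fintype.card F : ℝ) ^ (j * k) := by
        rw [← Real.rpow_natCast, ← Real.rpow_natCast, div_mul_eq_mul_div,
          ← Real.rpow_add (by positivity)]
        push_cast; ring_nf
    _ ≤ ((∏ i : Fin j, (Fintype.card F ^ m - Fintype.card F ^ (i : ℕ)) : ℕ) : ℝ) *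
          (Fintype.card F : ℝ) ^ (j * k) := by
        gcongr; exact pow_mul_div_four_le_prod_fin_pow_sub_pow hq hjm
    _ ≤ ballCount F m (j + k) j := by exact_mod_cast hcount

theorem ballCount_le_four_mul_rpow {m n j : ℕ} (hjn : j ≤ n) :
    (ballCount F m n j : ℝ) ≤ 4 * (Fintype.card F : ℝ) ^ ((j : ℝ) * (m + n - j)) := by
  set q := Fintype.card F
  have hq : 2 ≤ q := Fintype.one_lt_card
  have hcount : (ballCount F m n j : ℝ) * ((∏ i : Fin j, (q ^ j - q ^ (i : ℕ)) : ℕ) : ℝ) ≤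
      (q : ℝ) ^ (m * j) * (q : ℝ) ^ (n * j) := by
    have hLI : ∏ i : Fin j, (q ^ n - q ^ (i : ℕ)) ≤ q ^ (n * j) :=
      (prod_le_prod' fun _ _ => Nat.sub_le _ _).trans_eq (by simp [← pow_mul])
    exact_mod_cast (ballCount_mul_card_GL_le (F := F) (m := m) hjn).trans
      (Nat.mul_le_mul_left _ hLI)
  have hGL := pow_mul_div_four_le_prod_fin_pow_sub_pow hq (le_refl j)
  have hexp : (q : ℝ) ^ (m * j) * (q : ℝ) ^ (n * j) =
      (q : ℝ) ^ ((j : ℝ) * (m + n - j)) * (q : ℝ) ^ (j * j) := by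
    have hq0 : (0 : ℝ) < q := by positivity
    rw [← Real.rpow_natCast, ← Real.rpow_natCast, ← Real.rpow_natCast, ← Real.rpow_add hq0,
      ← Real.rpow_add hq0]
    push_cast; ring_nf
  have hpos : (0 : ℝ) < (q : ℝ) ^ (j * j) := by positivity
  nlinarith [Nat.cast_nonneg (α := ℝ) (ballCount F m n j)]

end BallCountBounds

theorem sum_Icc_mul_sub_eq (g : ℕ → ℝ) (n : ℕ) :
    ∑ i ∈ Icc 1 n, (i : ℝ) * (g (i - 1) - g i) = ∑ j ∈ range n, g j - n * g n := by
  induction n with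
  | zero => simp
  | succ n ih =>
    rw [sum_Icc_succ_top (by omega), ih, sum_range_succ, Nat.add_sub_cancel]
    push_cast; ring

theorem abs_sum_range_sub_le {f : ℕ → ℝ} {n : ℕ} {d ε δ : ℝ} (hd0 : 0 ≤ d) (hdn : d ≤ n)
    (hε : 0 ≤ ε) (hδ : 0 ≤ δ) (hf0 : ∀ j < n, 0 ≤ f j) (hf1 : ∀ j < n, f j ≤ 1)
    (hhead : ∀ j : ℕ, j + 1 ≤ d → 1 - ε ≤ f j) (htail : ∀ j < n, d + 1 ≤ j → f j ≤ δ) :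
    |∑ j ∈ range n, f j - d| ≤ 2 + n * (ε + δ) := by
  set D := ⌊d⌋₊
  have hDd : (D : ℝ) ≤ d := Nat.floor_le hd0
  have hdD : d < D + 1 := Nat.lt_floor_add_one d
  have hDn : D ≤ n := by exact_mod_cast hDd.trans hdn
  have hlow : D * (1 - ε) ≤ ∑ j ∈ range n, f j := calc
    (D : ℝ) * (1 - ε) = ∑ j ∈ range D, (1 - ε) := by
        rw [sum_const, card_range, nsmul_eq_mul]
    _ ≤ ∑ j ∈ range D, f j := sum_le_sum fun j hj => hhead j <| by
        have : j + 1 ≤ D := mem_range.mp hj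
        exact le_trans (by exact_mod_cast this) hDd
    _ ≤ ∑ j ∈ range n, f j :=
        sum_le_sum_of_subset_of_nonneg (range_subset_range.mpr hDn) fun j hj _ =>
          hf0 j (mem_range.mp hj)
  set K := min (D + 2) n
  have hup : ∑ j ∈ range n, f j ≤ K + n * δ := calc
    ∑ j ∈ range n, f j = ∑ j ∈ range K, f j + ∑ j ∈ Ico K n, f j :=
        (sum_range_add_sum_Ico f (min_le_right _ _)).symm
    _ ≤ ∑ j ∈ range K, 1 + ∑ j ∈ Ico K n, δ := by
        gcongr with j hj j hj
        · exact hf1 j (lt_of_lt_of_le (mem_range.mp hj) (min_le_right _ _))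
        · rw [mem_Ico] at hj
          refine htail j hj.2 ?_
          have : D + 2 ≤ j := by omega
          have : (D : ℝ) + 2 ≤ j := by exact_mod_cast this
          linarith
    _ ≤ K + n * δ := by
        simp only [sum_const, card_range, Nat.card_Ico, nsmul_eq_mul, mul_one]
        gcongr
        exact_mod_cast Nat.sub_le n K
  have hK : (K : ℝ) ≤ D + 2 := by exact_mod_cast min_le_left _ _
  have hεD : (D : ℝ) * ε ≤ n * ε := by gcongr
  rw [abs_le]
  constructor <;> nlinarith

theorem one_sub_le_one_sub_pow {t ε : ℝ} {N : ℕ} (ht : t ≤ 2) (hε : N * t ≤ ε) :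
    1 - ε ≤ (1 - t) ^ N := by
  have := one_add_mul_le_pow (a := -t) (by linarith) N
  rw [← sub_eq_add_neg] at this
  linarith

theorem one_sub_pow_le_exp_neg {t y : ℝ} {N : ℕ} (ht : t ≤ 1) (hy : y ≤ N * t) :
    (1 - t) ^ N ≤ Real.exp (-y) := calc
  (1 - t) ^ N ≤ Real.exp (-t) ^ N := pow_le_pow_left₀ (by linarith) (Real.one_sub_le_exp_neg t) N
  _ = Real.exp (-(N * t)) := by rw [← Real.exp_nat_mul]; ring_nf
  _ ≤ Real.exp (-y) := Real.exp_le_exp.mpr (by linarith)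

theorem div_eight_le_rpow_sqrt {q L : ℝ} (hq : 2 ≤ q) (hL : 0 ≤ L) : L / 8 ≤ q ^ √L := calc
  L / 8 = (√L / 2) ^ 2 / 2 := by rw [div_pow, Real.sq_sqrt hL]; ring
  _ ≤ Real.exp (√L / 2) := by
      nlinarith [Real.quadratic_le_exp_of_nonneg (x := √L / 2) (by positivity), Real.sqrt_nonneg L]
  _ ≤ Real.exp (Real.log 2 * √L) :=
      Real.exp_le_exp.mpr (by nlinarith [Real.log_two_gt_d9, Real.sqrt_nonneg L])
  _ = 2 ^ √L := (Real.rpow_def_of_pos two_pos _).symm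
  _ ≤ q ^ √L := Real.rpow_le_rpow (by norm_num) hq (Real.sqrt_nonneg _)

theorem mul_exp_neg_div_four_le (y : ℝ) : y * Real.exp (-(y / 4)) ≤ 4 := by
  rw [Real.exp_neg, ← div_eq_mul_inv, div_le_iff₀ (Real.exp_pos _)]
  linarith [Real.add_one_le_exp (y / 4)]

theorem mul_four_div_add_exp_neg_le {n y : ℝ} (hy0 : 0 < y) (hy : n / 4 ≤ y) :
    n * (4 / y + Real.exp (-(y / 4))) ≤ 32 := by
  have h1 : n * (4 / y) ≤ 16 := by rw [mul_div_assoc', div_le_iff₀ hy0]; linarith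
  have h2 : n * Real.exp (-(y / 4)) ≤ 4 * y * Real.exp (-(y / 4)) := by gcongr; linarith
  linarith [mul_exp_neg_div_four_le y]

/-- The smaller root of `(a - x) * (b - x) = L`; `smallerRoot m n (log_q N)` is the paper's `𝓜`. -/
noncomputable def smallerRoot (a b L : ℝ) : ℝ := (a + b) / 2 - √((a - b) ^ 2 / 4 + L)

section SmallerRoot

variable {a b L : ℝ}

theorem add_mul_sub_sub_mul_eq (hL : 0 ≤ L) (x : ℝ) :
    L + x * (a + b - x) - a * b = (x - smallerRoot a b L) * (a + b - smallerRoot a b L - x) := by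
  have hw := Real.sq_sqrt (by positivity : 0 ≤ (a - b) ^ 2 / 4 + L)
  unfold smallerRoot
  linear_combination (-1) * hw

theorem smallerRoot_nonneg (hab : 0 ≤ a + b) (hL : L ≤ a * b) : 0 ≤ smallerRoot a b L := by
  rw [smallerRoot, sub_nonneg, Real.sqrt_le_left (by linarith)]
  nlinarith

theorem smallerRoot_le (hL : 0 ≤ L) : smallerRoot a b L ≤ b := by
  have : (a - b) / 2 ≤ √((a - b) ^ 2 / 4 + L) := Real.le_sqrt_of_sq_le (by nlinarith)
  rw [smallerRoot]; linarith

theorem sqrt_le_sub_smallerRoot (hba : b ≤ a) : √L ≤ a - smallerRoot a b L := by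
  have : √L ≤ √((a - b) ^ 2 / 4 + L) := Real.sqrt_le_sqrt (by nlinarith)
  rw [smallerRoot]; linarith

theorem mul_le_neg_sqrt_of_add_one_le (hba : b ≤ a) {x : ℝ} (hxb : x ≤ b)
    (hx : x + 1 ≤ smallerRoot a b L) :
    (x - smallerRoot a b L) * (a + b - smallerRoot a b L - x) ≤ -√L := by
  have := sqrt_le_sub_smallerRoot (L := L) hba
  nlinarith [Real.sqrt_nonneg L]

theorem sqrt_le_mul_of_add_one_le (hba : b ≤ a) {x : ℝ} (hxb : x ≤ b)
    (hx : smallerRoot a b L + 1 ≤ x) :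
    √L ≤ (x - smallerRoot a b L) * (a + b - smallerRoot a b L - x) := by
  have := sqrt_le_sub_smallerRoot (L := L) hba
  nlinarith [Real.sqrt_nonneg L]

end SmallerRoot

theorem mul_rpow_div_rpow_eq {q N : ℝ} (hq : 0 < q) (hq1 : q ≠ 1) (hN : 0 < N)
    (hL : 0 ≤ Real.logb q N) (a b x : ℝ) :
    N * (q ^ (x * (a + b - x)) / q ^ (a * b)) = q ^ ((x - smallerRoot a b (Real.logb q N)) *
      (a + b - smallerRoot a b (Real.logb q N) - x)) := by
  rw [← add_mul_sub_sub_mul_eq hL, Real.rpow_sub hq, Real.rpow_add hq, Real.rpow_logb hq hq1 hN]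
  ring

section Threshold

variable {q a b x t : ℝ} {N : ℕ}

theorem one_sub_four_div_le_one_sub_pow (hq : 1 < q) (hN : 0 < N) (hL : 0 ≤ Real.logb q N)
    (hba : b ≤ a) (hxb : x ≤ b) (hx : x + 1 ≤ smallerRoot a b (Real.logb q N)) (ht1 : t ≤ 1)
    (ht : t ≤ 4 * q ^ (x * (a + b - x)) / q ^ (a * b)) :
    1 - 4 / q ^ √(Real.logb q N) ≤ (1 - t) ^ N := by
  refine one_sub_le_one_sub_pow (by linarith) ?_
  calc N * t ≤ 4 * (N * (q ^ (x * (a + b - x)) / q ^ (a * b))) := by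
        rw [mul_left_comm, ← mul_div_assoc]; gcongr
    _ = 4 * q ^ ((x - smallerRoot a b _) * (a + b - smallerRoot a b _ - x)) := by
        rw [mul_rpow_div_rpow_eq (by linarith) hq.ne' (by exact_mod_cast hN) hL]
    _ ≤ 4 * q ^ (-√(Real.logb q N)) := by
        gcongr
        · exact hq.le
        · exact mul_le_neg_sqrt_of_add_one_le hba hxb hx
    _ = 4 / q ^ √(Real.logb q N) := by rw [Real.rpow_neg (by linarith)]; ring

theorem one_sub_pow_le_exp_neg_rpow_sqrt (hq : 1 < q) (hN : 0 < N) (hL : 0 ≤ Real.logb q N)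
    (hba : b ≤ a) (hxb : x ≤ b) (hx : smallerRoot a b (Real.logb q N) + 1 ≤ x) (ht1 : t ≤ 1)
    (ht : q ^ (x * (a + b - x)) / 4 / q ^ (a * b) ≤ t) :
    (1 - t) ^ N ≤ Real.exp (-(q ^ √(Real.logb q N) / 4)) := by
  refine one_sub_pow_le_exp_neg ht1 ?_
  calc q ^ √(Real.logb q N) / 4
      ≤ q ^ ((x - smallerRoot a b _) * (a + b - smallerRoot a b _ - x)) / 4 := by
        gcongr ?_ / 4
        exact Real.rpow_le_rpow_of_exponent_le hq.le (sqrt_le_mul_of_add_one_le hba hxb hx)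
    _ = N * (q ^ (x * (a + b - x)) / 4 / q ^ (a * b)) := by
        rw [← mul_rpow_div_rpow_eq (by linarith) hq.ne' (by exact_mod_cast hN) hL]; ring
    _ ≤ N * t := by gcongr

end Threshold

theorem abs_sum_range_one_sub_div_pow_sub_smallerRoot_le {q : ℝ} (hq : 2 ≤ q) {m n N : ℕ}
    (hnm : n ≤ m) (hNlow : q ^ (m + n) ≤ N) (hNhigh : (N : ℝ) ≤ q ^ (m * n)) {B : ℕ → ℝ}
    (hBQ : ∀ j ≤ n, B j ≤ q ^ (m * n))
    (hBlow : ∀ j ≤ n, q ^ ((j : ℝ) * (m + n - j)) / 4 ≤ B j)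
    (hBup : ∀ j ≤ n, B j ≤ 4 * q ^ ((j : ℝ) * (m + n - j))) :
    |∑ j ∈ range n, (1 - B j / q ^ (m * n)) ^ N - smallerRoot m n (Real.logb q N)| ≤ 34 := by
  have hq0 : 0 < q := by linarith
  have hq1 : 1 < q := by linarith
  have hQ : q ^ (m * n) = q ^ ((m : ℝ) * n) := by rw [← Real.rpow_natCast]; push_cast; rfl
  have hnm' : (n : ℝ) ≤ m := by exact_mod_cast hnm
  have hN0 : (0 : ℝ) < N := (pow_pos hq0 _).trans_le hNlow
  have hLlow : (m : ℝ) + n ≤ Real.logb q N := by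
    rw [Real.le_logb_iff_rpow_le hq1 hN0]; exact_mod_cast hNlow
  have hLhigh : Real.logb q N ≤ m * n := by
    rw [Real.logb_le_iff_le_rpow hq1 hN0, ← hQ]; exact hNhigh
  have hL0 : 0 ≤ Real.logb q N := (by positivity : (0 : ℝ) ≤ m + n).trans hLlow
  have hratio : ∀ j ≤ n, 0 ≤ B j / q ^ (m * n) ∧ B j / q ^ (m * n) ≤ 1 := fun j hj =>
    ⟨div_nonneg ((by positivity : (0 : ℝ) ≤ _ / 4).trans (hBlow j hj)) (by positivity),
      div_le_one_of_le₀ (hBQ j hj) (by positivity)⟩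
  have hN : 0 < N := by exact_mod_cast hN0
  have hhead : ∀ j : ℕ, j + 1 ≤ smallerRoot m n (Real.logb q N) →
      1 - 4 / q ^ √(Real.logb q N) ≤ (1 - B j / q ^ (m * n)) ^ N := fun j hj => by
    have hjn : (j : ℝ) ≤ n := by linarith [smallerRoot_le (a := (m : ℝ)) (b := n) hL0]
    replace hjn : j ≤ n := by exact_mod_cast hjn
    refine one_sub_four_div_le_one_sub_pow hq1 hN hL0 hnm' (by exact_mod_cast hjn) hj
      (hratio j hjn).2 ?_
    rw [hQ]; gcongr; exact hBup j hjn
  have htail : ∀ j < n, smallerRoot m n (Real.logb q N) + 1 ≤ j →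
      (1 - B j / q ^ (m * n)) ^ N ≤ Real.exp (-(q ^ √(Real.logb q N) / 4)) := fun j hj hdj =>
    one_sub_pow_le_exp_neg_rpow_sqrt hq1 hN hL0 hnm' (by exact_mod_cast hj.le) hdj
      (hratio j hj.le).2 (by rw [hQ]; gcongr; exact hBlow j hj.le)
  have hsum := abs_sum_range_sub_le (smallerRoot_nonneg (by positivity) hLhigh)
    (smallerRoot_le hL0) (by positivity) (Real.exp_nonneg _)
    (fun j hj => pow_nonneg (by linarith [(hratio j hj.le).2]) N)
    (fun j hj => pow_le_one₀ (by linarith [(hratio j hj.le).2]) (by linarith [(hratio j hj.le).1]))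
    hhead htail
  linarith [mul_four_div_add_exp_neg_le (by positivity)
    (by linarith [div_eight_le_rpow_sqrt hq hL0] : (n : ℝ) / 4 ≤ q ^ √(Real.logb q N))]

theorem abs_sum_mul_sub_smallerRoot_le {q : ℝ} (hq : 2 ≤ q) {m n N : ℕ} (hnm : n ≤ m)
    (hNlow : q ^ (m + n) ≤ N) (hNhigh : (N : ℝ) ≤ q ^ (m * n)) {B : ℕ → ℝ}
    (hBQ : ∀ j ≤ n, B j ≤ q ^ (m * n)) (hBn : B n = q ^ (m * n))
    (hBlow : ∀ j ≤ n, q ^ ((j : ℝ) * (m + n - j)) / 4 ≤ B j)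
    (hBup : ∀ j ≤ n, B j ≤ 4 * q ^ ((j : ℝ) * (m + n - j))) :
    |∑ i ∈ Icc 1 n, (i : ℝ) *
        ((1 - B (i - 1) / q ^ (m * n)) ^ N - (1 - B i / q ^ (m * n)) ^ N) -
      smallerRoot m n (Real.logb q N)| ≤ 34 := by
  have hN : N ≠ 0 := Nat.cast_ne_zero.mp ((pow_pos (by linarith) _).trans_le hNlow).ne'
  rw [sum_Icc_mul_sub_eq (fun j => (1 - B j / q ^ (m * n)) ^ N), hBn,
    div_self (pow_pos (by linarith) _).ne', sub_self, zero_pow hN, mul_zero, sub_zero]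
  exact abs_sum_range_one_sub_div_pow_sub_smallerRoot_le hq hnm hNlow hNhigh hBQ hBlow hBup

theorem stmt12_general (q : ℕ) (F : Type*) [Field F] [Fintype F] (hq : Fintype.card F = q)
    (α : ℝ) (hα1 : α < 1) (m N : ℕ → ℕ)
    (hm : ∀ n, 2 ≤ n → n ≤ m n)
    (hNlow : ∀ n : ℕ, 2 ≤ n → 3 * Real.logb q (n : ℝ) * (q : ℝ) ^ ((m n + n : ℕ)) ≤ (N n : ℝ))
    (hNhigh : ∀ n : ℕ, 2 ≤ n → (N n : ℝ) ≤ (q : ℝ) ^ (α * (m n : ℝ) * n)) :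
    ∃ C : ℝ, 0 < C ∧ ∃ n₀ : ℕ, ∀ n ≥ n₀,
      |(∑ i ∈ Finset.Icc 1 n, (i : ℝ) *
          ((1 - (ballCount F (m n) n (i - 1) : ℝ) / (q : ℝ) ^ (m n * n)) ^ (N n) -
            (1 - (ballCount F (m n) n i : ℝ) / (q : ℝ) ^ (m n * n)) ^ (N n))) -
        (((m n : ℝ) + n) / 2 -
          Real.sqrt (((m n : ℝ) - n) ^ 2 / 4 + Real.logb q (N n)))| ≤ C := by
  subst hq
  have hq : 2 ≤ Fintype.card F := Fintype.one_lt_card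
  have hqR : (2 : ℝ) ≤ Fintype.card F := by exact_mod_cast hq
  refine ⟨34, by norm_num, Fintype.card F, fun n hn => ?_⟩
  have hn2 : 2 ≤ n := hq.trans hn
  have hlogn : 1 ≤ Real.logb (Fintype.card F) n := by
    rw [Real.le_logb_iff_rpow_le (by linarith) (by positivity), Real.rpow_one]
    exact_mod_cast hn
  have hmn := hm n hn2
  have hNlow' : (Fintype.card F : ℝ) ^ (m n + n) ≤ N n := by
    nlinarith [hNlow n hn2, pow_pos (by linarith : (0 : ℝ) < Fintype.card F) (m n + n)]
  have hNhigh' : (N n : ℝ) ≤ (Fintype.card F : ℝ) ^ (m n * n) := by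
    refine (hNhigh n hn2).trans ?_
    rw [← Real.rpow_natCast]
    push_cast
    exact Real.rpow_le_rpow_of_exponent_le (by linarith)
      (by nlinarith [(by positivity : (0 : ℝ) ≤ m n * n)])
  exact abs_sum_mul_sub_smallerRoot_le (B := fun j => (ballCount F (m n) n j : ℝ)) hqR hmn
    hNlow' hNhigh' (fun j _ => by exact_mod_cast ballCount_le _ _ _)
    (by exact_mod_cast ballCount_of_le le_rfl)
    (fun j hj => rpow_div_four_le_ballCount (hj.trans hmn) hj)
    (fun j hj => ballCount_le_four_mul_rpow hj)

/-- Average minimum rank distance of random codes. -/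
theorem stmt12 (q : ℕ) (F : Type*) [Field F] [Fintype F] (hq : Fintype.card F = q)
    (α : ℝ) (hα0 : 0 < α) (hα1 : α < 1) (m N : ℕ → ℕ)
    (hm : ∀ n, 2 ≤ n → n ≤ m n) (hN2 : ∀ n, 2 ≤ n → 2 ≤ N n)
    (hNlow : ∀ n : ℕ, 2 ≤ n → 3 * Real.logb q (n : ℝ) * (q : ℝ) ^ ((m n + n : ℕ)) ≤ (N n : ℝ))
    (hNhigh : ∀ n : ℕ, 2 ≤ n → (N n : ℝ) ≤ (q : ℝ) ^ (α * (m n : ℝ) * n)) :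
    ∃ C : ℝ, 0 < C ∧ ∃ n₀ : ℕ, ∀ n ≥ n₀,
      |(∑ i ∈ Finset.Icc 1 n, (i : ℝ) *
          ((1 - (ballCount F (m n) n (i - 1) : ℝ) / (q : ℝ) ^ (m n * n)) ^ (N n) -
            (1 - (ballCount F (m n) n i : ℝ) / (q : ℝ) ^ (m n * n)) ^ (N n))) -
        (((m n : ℝ) + n) / 2 -
          Real.sqrt (((m n : ℝ) - n) ^ 2 / 4 + Real.logb q (N n)))| ≤ C :=
  stmt12_general q F hq α hα1 m N hm hNlow hNhigh
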